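/- arXiv:2001.09470 — 4 statements merged into one kernel-verified Lean document; each statement's English description precedes it below -/
import Mathlib

section
/- Let H(z) := E_z[Σ_{i=1}^{τ⁺} h(Y_i)]. For every y ∈ ℝ and every level w ≥ y such that τ_w < ∞ holds P_y-almost surely and E_y[Σ_{i=1}^{τ_w} h(Y_i)] < ∞, the total running cost up to τ_w decomposes along the ascending ladder epochs: Σ_{n=0}^∞ E_y[ H(Y_{σ_n}) · 1_{{σ_n < τ_w}} ] = E_y[ Σ_{i=1}^{τ_w} h(Y_i) ]. -/
open MeasureTheory ProbabilityTheory Filter Set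
open scoped ENNReal NNReal ENat

noncomputable section

namespace Stmt

/-- Trajectory space of the chain. -/
abbrev Traj : Type := ℕ → ℝ

/-- First entry time of the trajectory into `(x, ∞)` (infimum over `n ≥ 0`),
with value `⊤` if the level is never exceeded. -/
noncomputable def hitGT (x : ℝ) (ω : Traj) : ℕ∞ :=
  sInf ((fun n : ℕ => (n : ℕ∞)) '' {n : ℕ | x < ω n})

/-- First entry time of the trajectory into `[x, ∞)`. -/
noncomputable def hitGE (x : ℝ) (ω : Traj) : ℕ∞ :=
  sInf ((fun n : ℕ => (n : ℕ∞)) '' {n : ℕ | x ≤ ω n})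

/-- `τ⁺ = inf {n ≥ 1 : Y_n > Y_0}`. -/
noncomputable def tauPlus (ω : Traj) : ℕ∞ :=
  sInf ((fun n : ℕ => (n : ℕ∞)) '' {n : ℕ | 1 ≤ n ∧ ω 0 < ω n})

/-- Accumulated running costs `∑_{i=1}^{n} h (Y_i)`. -/
def costSum (h : ℝ → ℝ) (n : ℕ) (ω : Traj) : ℝ := ∑ i ∈ Finset.Icc 1 n, h (ω i)

/-- Pay-off when stopping at (deterministic) time `n`. -/
def payoffAt (γ h : ℝ → ℝ) (n : ℕ) (ω : Traj) : ℝ := γ (ω n) - costSum h n ω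

/-- Pay-off when stopping at the (finite) value of a random time `τ`. -/
def payoffStopped (γ h : ℝ → ℝ) (τ : Traj → ℕ∞) (ω : Traj) : ℝ :=
  payoffAt γ h (τ ω).toNat ω

/-- Pay-off of a possibly infinite random time, with the value `-∞` on `{τ = ∞}`. -/
def payoffE (γ h : ℝ → ℝ) (τ : Traj → ℕ∞) (ω : Traj) : EReal :=
  if τ ω = ⊤ then (⊥ : EReal) else ((payoffStopped γ h τ ω : ℝ) : EReal)

/-- Positive part of an extended real number, as an element of `ℝ≥0∞`. -/
noncomputable def epos (x : EReal) : ℝ≥0∞ :=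
  if x = ⊤ then ⊤ else ENNReal.ofReal x.toReal

/-- Expectation of an extended-real random variable (with the convention `∞ - ∞ = -∞`). -/
noncomputable def eexp (μ : Measure Traj) (Z : Traj → EReal) : EReal :=
  ((∫⁻ ω, epos (Z ω) ∂μ : ℝ≥0∞) : EReal) - ((∫⁻ ω, epos (-(Z ω)) ∂μ : ℝ≥0∞) : EReal)

/-- The natural filtration of the coordinate process. -/
noncomputable def natF : Filtration ℕ (inferInstance : MeasurableSpace Traj) :=
  Filtration.natural (fun n (ω : Traj) => ω n)
    (fun n => (measurable_pi_apply n).stronglyMeasurable)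

/-- `τ` is a (possibly infinite) stopping time of the natural filtration. -/
def IsStopTime (τ : Traj → ℕ∞) : Prop :=
  ∀ n : ℕ, MeasurableSet[natF n] {ω : Traj | τ ω ≤ (n : ℕ∞)}

/-- A time-homogeneous Markov family on the real line: the joint law `P y` of the chain
started in `y`, together with the (time-homogeneous) Markov property. -/
structure MarkovFamily where
  /-- `P y` is the law of the chain started at `y` (a kernel, so measurable in `y`). -/
  P : Kernel ℝ Traj
  isMarkov : IsMarkovKernel P
  start : ∀ y : ℝ, ∀ᵐ ω ∂(P y), ω 0 = y
  markov : ∀ (y : ℝ) (n : ℕ) (B : Set (Fin (n + 1) → ℝ)) (A : Set Traj),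
    MeasurableSet B → MeasurableSet A →
    P y ({ω : Traj | (fun i : Fin (n + 1) => ω i) ∈ B} ∩ {ω : Traj | (fun k => ω (n + k)) ∈ A})
      = ∫⁻ ω in {ω : Traj | (fun i : Fin (n + 1) => ω i) ∈ B}, P (ω n) A ∂(P y)

/-- `φ(y) = E_y[γ(Y_{τ⁺}) - ∑_{i=1}^{τ⁺} h(Y_i)]`. -/
noncomputable def phi (M : MarkovFamily) (γ h : ℝ → ℝ) (y : ℝ) : ℝ :=
  ∫ ω, payoffStopped γ h tauPlus ω ∂(M.P y)

/-- `g(y) = E_y[τ⁺]`. -/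
noncomputable def gfun (M : MarkovFamily) (y : ℝ) : ℝ :=
  ∫ ω, ((tauPlus ω).toNat : ℝ) ∂(M.P y)

/-- `f(y) = (φ(y) - γ(y))/E_y[τ⁺]`. -/
noncomputable def ffun (M : MarkovFamily) (γ h : ℝ → ℝ) (y : ℝ) : ℝ :=
  (phi M γ h y - γ y) / gfun M y

/-- Well-definedness of `φ`, `g` and `f`. -/
def WellDefined (M : MarkovFamily) (γ h : ℝ → ℝ) : Prop :=
  ∀ y : ℝ, (∀ᵐ ω ∂(M.P y), tauPlus ω ≠ ⊤) ∧
    Integrable (payoffStopped γ h tauPlus) (M.P y) ∧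
    Integrable (fun ω => ((tauPlus ω).toNat : ℝ)) (M.P y) ∧
    0 < gfun M y

/-- Assumption (Opt): `E_y[sup_n (γ(Y_n) - ∑_{i=1}^n h(Y_i))] < ∞` and
`γ(Y_n) - ∑_{i=1}^n h(Y_i) → -∞` a.s. -/
def OptAssumption (M : MarkovFamily) (γ h : ℝ → ℝ) : Prop :=
  ∀ y : ℝ,
    (∫⁻ ω, epos (⨆ n : ℕ, ((payoffAt γ h n ω : ℝ) : EReal)) ∂(M.P y)) < ⊤ ∧
    (∀ᵐ ω ∂(M.P y), Tendsto (fun n => payoffAt γ h n ω) atTop atBot)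

/-- Assumption (F) relative to the root `x̄`. -/
def FAssumption (M : MarkovFamily) (γ h : ℝ → ℝ) (xbar : ℝ) : Prop :=
  (∀ z : ℝ, z < xbar → 0 < ffun M γ h z) ∧
  (∀ z : ℝ, xbar < z → ffun M γ h z < 0) ∧
  AntitoneOn (ffun M γ h) (Set.Ici xbar)

/-- The ascending ladder epochs `σ_0 = 0`, `σ_{n+1} = inf {k > σ_n : Y_k > Y_{σ_n}}`. -/
noncomputable def ladder (ω : Traj) : ℕ → ℕ∞
  | 0 => 0
  | n + 1 =>
    if ladder ω n = ⊤ then ⊤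
    else sInf ((fun k : ℕ => (k : ℕ∞)) ''
      {k : ℕ | (ladder ω n).toNat < k ∧ ω ((ladder ω n).toNat) < ω k})

/-- The value function `V(y)`, a supremum over all stopping times of the natural
filtration, with the pay-off interpreted as `-∞` on `{τ = ∞}`. -/
noncomputable def V (M : MarkovFamily) (γ h : ℝ → ℝ) (y : ℝ) : EReal :=
  ⨆ τ : {τ : Traj → ℕ∞ // IsStopTime τ}, eexp (M.P y) (payoffE γ h τ.1)


/-- `∑_{i=1}^{τ} h(Y_i)` as an extended-real sum (counting all `i ≥ 1` when `τ = ∞`). -/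
noncomputable def costSumE (h : ℝ → ℝ) (τ : Traj → ℕ∞) (ω : Traj) : ℝ≥0∞ :=
  ∑' i : ℕ, if 1 ≤ i ∧ (i : ℕ∞) ≤ τ ω then ENNReal.ofReal (h (ω i)) else 0

/-- `H(z) = E_z[∑_{i=1}^{τ⁺} h(Y_i)]`. -/
noncomputable def HfunE (M : MarkovFamily) (h : ℝ → ℝ) (z : ℝ) : ℝ≥0∞ :=
  ∫⁻ ω, costSumE h tauPlus ω ∂(M.P z)

/-!
Before `τ_w` the path stays at or below `w`, so `τ_w` is itself a ladder epoch: if `σ_n < τ_w`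
then `σ_{n+1} ≤ τ_w`. Hence, pathwise, the cost `∑_{i=1}^{τ_w} h(Y_i)` is the sum, over the `n` with
`σ_n < τ_w`, of the costs of the ladder excursions `(σ_n, σ_{n+1}]`. The `n`-th excursion is the
`τ⁺`-excursion of the path shifted by `σ_n`, and `{σ_n < τ_w}` is an event before `σ_n`, so the
strong Markov property turns its expected cost on that event into `E_y[H(Y_{σ_n}); σ_n < τ_w]`.
Summing over `n` by monotone convergence gives the identity.
-/

def firstTime (S : Set ℕ) : ℕ∞ := sInf ((↑) '' S)

section firstTime

variable {S : Set ℕ}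

theorem le_firstTime_iff {a : ℕ∞} : a ≤ firstTime S ↔ ∀ m ∈ S, a ≤ m := by
  simp [firstTime, le_sInf_iff]

theorem firstTime_le {m : ℕ} (hm : m ∈ S) : firstTime S ≤ m := sInf_le ⟨m, hm, rfl⟩

theorem lt_firstTime_iff {k : ℕ} : (k : ℕ∞) < firstTime S ↔ ∀ j ≤ k, j ∉ S := by
  rw [← Order.add_one_le_iff_of_not_isMax (not_isMax_iff_ne_top.2 (ENat.natCast_ne_top k)),
    le_firstTime_iff]
  refine ⟨fun h j hj hjS => ?_, fun h m hm => ?_⟩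
  · have := h j hjS
    norm_cast at this
    omega
  · exact_mod_cast Nat.succ_le_of_lt (not_le.1 fun hmk => h m hmk hm)

theorem firstTime_eq_coe_iff {k : ℕ} : firstTime S = k ↔ k ∈ S ∧ ∀ j < k, j ∉ S := by
  have hle : (k : ℕ∞) ≤ firstTime S ↔ ∀ j < k, j ∉ S := by
    rw [le_firstTime_iff]
    refine ⟨fun h j hj hjS => ?_, fun h m hm => ?_⟩
    · exact absurd (h j hjS) (by exact_mod_cast hj.not_ge)
    · exact_mod_cast not_lt.1 fun hmk => h m hmk hm
  refine ⟨fun h => ⟨?_, hle.1 h.ge⟩, fun ⟨hk, hmin⟩ => (firstTime_le hk).antisymm (hle.2 hmin)⟩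
  by_contra hk
  refine (lt_firstTime_iff.2 fun j hj => ?_).ne' h
  rcases hj.lt_or_eq with hj | rfl
  exacts [hle.1 h.ge j hj, hk]

theorem firstTime_image_add (k : ℕ) : firstTime ((k + ·) '' S) = k + firstTime S := by
  simp only [firstTime, image_image, sInf_image, Nat.cast_add, ENat.add_iInf₂]

theorem measurable_firstTime {α : Type*} [MeasurableSpace α] {A : ℕ → Set α}
    (hA : ∀ n, MeasurableSet (A n)) : Measurable fun x => firstTime {n | x ∈ A n} := by
  refine ENat.measurable_iff.2 fun k => ?_
  have : (fun x => firstTime {n | x ∈ A n}) ⁻¹' {(k : ℕ∞)} = A k ∩ ⋂ j < k, (A j)ᶜ := by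
    ext x
    simp [firstTime_eq_coe_iff]
  rw [this]
  exact (hA k).inter (.biInter (to_countable _) fun j _ => (hA j).compl)

end firstTime

def sumIoc (f : ℕ → ℝ≥0∞) (a b : ℕ∞) : ℝ≥0∞ :=
  ∑' i : ℕ, if (i : ℕ∞) ∈ Ioc a b then f i else 0

theorem sumIoc_comp_add (f : ℕ → ℝ≥0∞) (k : ℕ) (b : ℕ∞) :
    sumIoc (fun i => f (k + i)) 0 b = sumIoc f k (k + b) := by
  symm
  rw [sumIoc, sumIoc, ← (add_right_injective k).tsum_eq]
  · refine tsum_congr fun i => ?_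
    simp only [mem_Ioc, Nat.cast_add, ENat.add_le_add_iff_left (ENat.natCast_ne_top k)]
    norm_cast
    simp
  · intro i hi
    have hki : k < i := by
      simp only [Function.mem_support, ne_eq, ite_eq_right_iff, not_forall] at hi
      exact_mod_cast hi.1.1
    exact ⟨i - k, by simp only; omega⟩

theorem tsum_ite_sumIoc_eq_sumIoc (f : ℕ → ℝ≥0∞) {σ : ℕ → ℕ∞} (hσ : Monotone σ)
    (hσ0 : σ 0 = 0) (hσn : ∀ n : ℕ, (n : ℕ∞) ≤ σ n) {τ : ℕ∞}
    (hτ : ∀ n, σ n < τ → σ (n + 1) ≤ τ) :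
    ∑' n, (if σ n < τ then sumIoc f (σ n) (σ (n + 1)) else 0) = sumIoc f 0 τ := by
  calc ∑' n, (if σ n < τ then sumIoc f (σ n) (σ (n + 1)) else 0)
      = ∑' n, ∑' i : ℕ, if σ n < τ ∧ (i : ℕ∞) ∈ Ioc (σ n) (σ (n + 1)) then f i else 0 := by
        refine tsum_congr fun n => ?_
        split_ifs with h <;> simp [sumIoc, h]
    _ = ∑' i : ℕ, ∑' n, if σ n < τ ∧ (i : ℕ∞) ∈ Ioc (σ n) (σ (n + 1)) then f i else 0 :=
        ENNReal.tsum_comm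
    _ = sumIoc f 0 τ := tsum_congr fun i => ?_
  by_cases hi : (i : ℕ∞) ∈ Ioc 0 τ
  · obtain ⟨n, hn⟩ : ∃ n, (i : ℕ∞) ∈ Ioc (σ n) (σ (n + 1)) := by
      obtain ⟨n, -, hn⟩ := mem_iUnion₂.1 <|
        Ioc_subset_biUnion_Ioc i σ (by rw [hσ0]; exact ⟨hi.1, hσn i⟩)
      exact ⟨n, hn⟩
    rw [tsum_eq_single n, if_pos ⟨hn.1.trans_le hi.2, hn⟩, if_pos hi]
    intro m hmn
    have hdisj := hσ.pairwise_disjoint_on_Ioc_succ hmn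
    simp only [Order.succ_eq_add_one] at hdisj
    exact if_neg fun hm => disjoint_left.1 hdisj hm.2 hn
  · rw [if_neg hi, ENNReal.tsum_eq_zero]
    intro n
    refine if_neg fun ⟨hlt, hmem⟩ => hi ⟨pos_of_gt hmem.1, hmem.2.trans (hτ n hlt)⟩

theorem measurable_sumIoc {α : Type*} [MeasurableSpace α] {f : α → ℕ → ℝ≥0∞}
    (hf : ∀ i, Measurable fun x => f x i) {a b : α → ℕ∞} (ha : Measurable a)
    (hb : Measurable b) : Measurable fun x => sumIoc (f x) (a x) (b x) :=
  .tsum fun i =>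
    .ite ((ha.prodMk hb) (MeasurableSet.of_discrete (s := {p : ℕ∞ × ℕ∞ | (i : ℕ∞) ∈ Ioc p.1 p.2})))
      (hf i) measurable_const

def shift (k : ℕ) (ω : Traj) : Traj := fun i => ω (k + i)

theorem measurable_shift (k : ℕ) : Measurable (shift k) :=
  measurable_pi_lambda _ fun i => measurable_pi_apply (k + i)

def IsDeterminedUpTo (k : ℕ) (S : Set Traj) : Prop :=
  ∀ ⦃ω ω' : Traj⦄, (∀ i ≤ k, ω i = ω' i) → ω ∈ S → ω' ∈ S

theorem IsDeterminedUpTo.inter {k : ℕ} {S T : Set Traj} (hS : IsDeterminedUpTo k S)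
    (hT : IsDeterminedUpTo k T) : IsDeterminedUpTo k (S ∩ T) :=
  fun _ _ hag hω => ⟨hS hag hω.1, hT hag hω.2⟩

theorem IsDeterminedUpTo.exists_cylinder {k : ℕ} {S : Set Traj} (hdet : IsDeterminedUpTo k S)
    (hS : MeasurableSet S) : ∃ B : Set (Fin (k + 1) → ℝ), MeasurableSet B ∧
      S = {ω | (fun i : Fin (k + 1) => ω i) ∈ B} := by
  let extend (v : Fin (k + 1) → ℝ) : Traj := fun j => v ⟨min j k, by omega⟩
  have hextend : Measurable extend := measurable_pi_lambda _ fun j => measurable_pi_apply _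
  refine ⟨extend ⁻¹' S, hextend hS, ?_⟩
  ext ω
  have hag : ∀ i ≤ k, ω i = extend (fun i : Fin (k + 1) => ω i) i := fun i hi => by
    simp [extend, min_eq_left hi]
  exact ⟨hdet hag, hdet fun i hi => (hag i hi).symm⟩

namespace MarkovFamily

variable (M : MarkovFamily) (y : ℝ)

theorem setLIntegral_comp_shift {k : ℕ} {S : Set Traj} (hS : MeasurableSet S)
    (hdet : IsDeterminedUpTo k S) {f : Traj → ℝ≥0∞} (hf : Measurable f) :
    ∫⁻ ω in S, f (shift k ω) ∂M.P y = ∫⁻ ω in S, ∫⁻ ω', f ω' ∂M.P (ω k) ∂M.P y := by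
  obtain ⟨B, hB, hSB⟩ := hdet.exists_cylinder hS
  have hker : Measurable fun ω : Traj => M.P (ω k) := M.P.measurable.comp (measurable_pi_apply k)
  have hlaw : ((M.P y).restrict S).map (shift k)
      = ((M.P y).restrict S).bind fun ω => M.P (ω k) := by
    ext A hA
    rw [Measure.map_apply (measurable_shift k) hA, Measure.restrict_apply (measurable_shift k hA),
      Measure.bind_apply hA hker.aemeasurable, inter_comm, hSB]
    exact M.markov y k B A hB hA
  rw [← lintegral_map hf (measurable_shift k), hlaw,
    Measure.lintegral_bind hker.aemeasurable hf.aemeasurable]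

/-- The strong Markov property; `hdet` says that `E` lies in the σ-algebra of events before `σ`. -/
theorem strongMarkov_setLIntegral {σ : Traj → ℕ∞} (hσ : Measurable σ) {E : Set Traj}
    (hE : MeasurableSet E) (hEσ : ∀ ω ∈ E, σ ω ≠ ⊤)
    (hdet : ∀ k : ℕ, IsDeterminedUpTo k (E ∩ {ω | σ ω = k})) {f : Traj → ℝ≥0∞}
    (hf : Measurable f) :
    ∫⁻ ω in E, f (shift (σ ω).toNat ω) ∂M.P y
      = ∫⁻ ω in E, ∫⁻ ω', f ω' ∂M.P (ω (σ ω).toNat) ∂M.P y := by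
  have hpiece : ∀ k : ℕ, MeasurableSet (E ∩ {ω | σ ω = k}) :=
    fun k => hE.inter (hσ (measurableSet_singleton _))
  have hdisj : Pairwise (Function.onFun Disjoint fun k : ℕ => E ∩ {ω | σ ω = k}) :=
    fun k l hkl => disjoint_left.2 fun ω hk hl => hkl (by exact_mod_cast hk.2.symm.trans hl.2)
  have hunion : E = ⋃ k : ℕ, E ∩ {ω | σ ω = k} := by
    ext ω
    simp only [mem_iUnion, mem_inter_iff, mem_ofPred_eq, exists_and_left]
    exact ⟨fun hω => ⟨hω, ENat.ne_top_iff_exists.1 (hEσ ω hω) |>.imp fun _ => Eq.symm⟩,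
      And.left⟩
  rw [hunion, lintegral_iUnion hpiece hdisj, lintegral_iUnion hpiece hdisj]
  refine tsum_congr fun k => ?_
  have htoNat : ∀ ω ∈ E ∩ {ω | σ ω = k}, (σ ω).toNat = k := fun ω hω => by
    rw [show σ ω = k from hω.2, ENat.toNat_natCast]
  calc ∫⁻ ω in E ∩ {ω | σ ω = k}, f (shift (σ ω).toNat ω) ∂M.P y
      = ∫⁻ ω in E ∩ {ω | σ ω = k}, f (shift k ω) ∂M.P y :=
        setLIntegral_congr_fun (hpiece k) fun ω hω => by rw [htoNat ω hω]
    _ = ∫⁻ ω in E ∩ {ω | σ ω = k}, ∫⁻ ω', f ω' ∂M.P (ω k) ∂M.P y :=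
        M.setLIntegral_comp_shift y (hpiece k) (hdet k) hf
    _ = ∫⁻ ω in E ∩ {ω | σ ω = k}, ∫⁻ ω', f ω' ∂M.P (ω (σ ω).toNat) ∂M.P y :=
        setLIntegral_congr_fun (hpiece k) fun ω hω => by rw [htoNat ω hω]

end MarkovFamily

theorem hitGT_eq_firstTime (x : ℝ) (ω : Traj) : hitGT x ω = firstTime {n | x < ω n} := rfl

theorem measurable_hitGT (x : ℝ) : Measurable (hitGT x) :=
  measurable_firstTime fun n => measurableSet_lt measurable_const (measurable_pi_apply n)

theorem measurable_tauPlus : Measurable tauPlus :=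
  measurable_firstTime fun n => (MeasurableSet.const _).inter
    (measurableSet_lt (measurable_pi_apply 0) (measurable_pi_apply n))

theorem one_le_tauPlus (ω : Traj) : 1 ≤ tauPlus ω :=
  le_firstTime_iff.2 fun m hm => by exact_mod_cast hm.1

section ladder

variable {ω : Traj} {n : ℕ}

theorem ladder_succ_of_eq_top (hn : ladder ω n = ⊤) : ladder ω (n + 1) = ⊤ := by
  rw [ladder, if_pos hn]

theorem ladder_succ_of_eq_coe {m : ℕ} (hn : ladder ω n = m) :
    ladder ω (n + 1) = firstTime {j | m < j ∧ ω m < ω j} := by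
  rw [ladder, if_neg (hn ▸ ENat.natCast_ne_top m), hn, ENat.toNat_natCast]
  rfl

theorem ladder_succ_eq_add_tauPlus_shift {k : ℕ} (hn : ladder ω n = k) :
    ladder ω (n + 1) = k + tauPlus (shift k ω) := by
  have : {j | k < j ∧ ω k < ω j} = (k + ·) '' {m | 1 ≤ m ∧ ω k < ω (k + m)} := by
    ext j
    refine ⟨fun ⟨hkj, hj⟩ => ⟨j - k, ⟨by omega, by rwa [Nat.add_sub_cancel' hkj.le]⟩,
      show k + (j - k) = j by omega⟩, ?_⟩
    rintro ⟨m, ⟨hm, hωm⟩, rfl⟩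
    exact ⟨show k < k + m by omega, hωm⟩
  rw [ladder_succ_of_eq_coe hn, this, firstTime_image_add]
  rfl

theorem ladder_add_one_le_ladder_succ (ω : Traj) (n : ℕ) : ladder ω n + 1 ≤ ladder ω (n + 1) := by
  cases hn : ladder ω n with
  | top => simp [ladder_succ_of_eq_top hn]
  | coe k =>
    rw [ladder_succ_eq_add_tauPlus_shift hn]
    gcongr
    exact one_le_tauPlus _

theorem ladder_monotone (ω : Traj) : Monotone (ladder ω) :=
  monotone_nat_of_le_succ fun n => le_self_add.trans (ladder_add_one_le_ladder_succ ω n)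

theorem le_ladder (ω : Traj) (n : ℕ) : (n : ℕ∞) ≤ ladder ω n := by
  induction n with
  | zero => simp
  | succ n ih =>
    have : ((n + 1 : ℕ) : ℕ∞) ≤ ladder ω n + 1 := by push_cast; gcongr
    exact this.trans (ladder_add_one_le_ladder_succ ω n)

theorem ladder_succ_le_hitGT {w : ℝ} (hn : ladder ω n < hitGT w ω) :
    ladder ω (n + 1) ≤ hitGT w ω := by
  obtain ⟨m, hm⟩ := ENat.ne_top_iff_exists.1 hn.ne_top
  cases hτ : hitGT w ω with
  | top => exact le_top
  | coe N =>
    rw [← hm, hτ, Nat.cast_lt] at hn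
    rw [hitGT_eq_firstTime, firstTime_eq_coe_iff] at hτ
    rw [ladder_succ_of_eq_coe hm.symm]
    exact firstTime_le ⟨hn, (not_lt.1 (hτ.2 m hn)).trans_lt hτ.1⟩

theorem isDeterminedUpTo_ladder_eq (n k : ℕ) : IsDeterminedUpTo k {ω | ladder ω n = k} := by
  induction n generalizing k with
  | zero => exact fun _ _ _ h => h
  | succ n ih =>
    intro ω ω' hag hk
    simp only [mem_ofPred_eq] at hk ⊢
    cases hn : ladder ω n with
    | top => simp [ladder_succ_of_eq_top hn] at hk
    | coe m =>
      have hmk : m < k := by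
        have := (ladder_add_one_le_ladder_succ ω n).trans_eq hk
        rw [hn] at this
        exact_mod_cast (ENat.add_one_le_iff (ENat.natCast_ne_top m)).1 this
      rw [ladder_succ_of_eq_coe hn, firstTime_eq_coe_iff] at hk
      rw [ladder_succ_of_eq_coe (ih m (fun i hi => hag i (by omega)) hn), firstTime_eq_coe_iff]
      simp only [mem_ofPred_eq, ← hag m hmk.le] at hk ⊢
      refine ⟨⟨hk.1.1, hag k le_rfl ▸ hk.1.2⟩, fun j hj => ?_⟩
      exact hag j hj.le ▸ hk.2 j hj

end ladder

theorem isDeterminedUpTo_lt_hitGT (w : ℝ) (k : ℕ) :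
    IsDeterminedUpTo k {ω | (k : ℕ∞) < hitGT w ω} := fun ω ω' hag hk => by
  simp only [mem_ofPred_eq, hitGT_eq_firstTime, lt_firstTime_iff] at hk ⊢
  exact fun j hj => hag j hj ▸ hk j hj

theorem measurable_ladder (n : ℕ) : Measurable fun ω => ladder ω n := by
  induction n with
  | zero => exact measurable_const
  | succ n ih =>
    let next (p : Traj × ℕ∞) : ℕ∞ :=
      if p.2 = ⊤ then ⊤ else firstTime {j | p.2.toNat < j ∧ p.1 p.2.toNat < p.1 j}
    have hnext : Measurable next := measurable_from_prod_countable_left fun m => by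
      by_cases hm : m = ⊤
      · simp only [next, if_pos hm]; exact measurable_const
      · simp only [next, if_neg hm]
        exact measurable_firstTime fun j => (MeasurableSet.const _).inter
          (measurableSet_lt (measurable_pi_apply _) (measurable_pi_apply j))
    exact hnext.comp (measurable_id.prodMk ih)

theorem costSumE_eq_sumIoc (h : ℝ → ℝ) (τ : Traj → ℕ∞) (ω : Traj) :
    costSumE h τ ω = sumIoc (fun i => ENNReal.ofReal (h (ω i))) 0 (τ ω) := by
  refine tsum_congr fun i => ?_
  simp [Nat.one_le_iff_ne_zero, pos_iff_ne_zero]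

theorem measurable_costSumE {h : ℝ → ℝ} (hh : Measurable h) {τ : Traj → ℕ∞}
    (hτ : Measurable τ) : Measurable (costSumE h τ) := by
  simp only [funext (costSumE_eq_sumIoc h τ)]
  exact measurable_sumIoc (fun i => (hh.comp (measurable_pi_apply i)).ennreal_ofReal)
    measurable_const hτ

def excursionCost (h : ℝ → ℝ) (n : ℕ) (ω : Traj) : ℝ≥0∞ :=
  sumIoc (fun i => ENNReal.ofReal (h (ω i))) (ladder ω n) (ladder ω (n + 1))

theorem measurable_excursionCost {h : ℝ → ℝ} (hh : Measurable h) (n : ℕ) :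
    Measurable (excursionCost h n) :=
  measurable_sumIoc (fun i => (hh.comp (measurable_pi_apply i)).ennreal_ofReal)
    (measurable_ladder n) (measurable_ladder (n + 1))

theorem costSumE_tauPlus_shift (h : ℝ → ℝ) {ω : Traj} {n k : ℕ} (hn : ladder ω n = k) :
    costSumE h tauPlus (shift k ω) = excursionCost h n ω := by
  rw [costSumE_eq_sumIoc, excursionCost, hn, ladder_succ_eq_add_tauPlus_shift hn]
  exact sumIoc_comp_add (fun i => ENNReal.ofReal (h (ω i))) k _

theorem measurableSet_ladder_lt_hitGT (w : ℝ) (n : ℕ) :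
    MeasurableSet {ω | ladder ω n < hitGT w ω} :=
  (measurable_ladder n).prodMk (measurable_hitGT w)
    (.of_discrete : MeasurableSet {p : ℕ∞ × ℕ∞ | p.1 < p.2})

theorem setLIntegral_HfunE_ladder (M : MarkovFamily) {h : ℝ → ℝ} (hh : Measurable h)
    (y w : ℝ) (n : ℕ) :
    ∫⁻ ω in {ω | ladder ω n < hitGT w ω}, HfunE M h (ω (ladder ω n).toNat) ∂M.P y
      = ∫⁻ ω in {ω | ladder ω n < hitGT w ω}, excursionCost h n ω ∂M.P y := by
  have hE := measurableSet_ladder_lt_hitGT w n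
  have hdet :
      ∀ k : ℕ, IsDeterminedUpTo k ({ω | ladder ω n < hitGT w ω} ∩ {ω | ladder ω n = k}) := by
    intro k
    have : {ω | ladder ω n < hitGT w ω} ∩ {ω | ladder ω n = k}
        = {ω | ladder ω n = k} ∩ {ω | (k : ℕ∞) < hitGT w ω} := by
      ext ω
      simp only [mem_inter_iff, mem_ofPred_eq]
      exact ⟨fun ⟨hlt, hk⟩ => ⟨hk, hk ▸ hlt⟩, fun ⟨hk, hlt⟩ => ⟨hk ▸ hlt, hk⟩⟩
    rw [this]
    exact (isDeterminedUpTo_ladder_eq n k).inter (isDeterminedUpTo_lt_hitGT w k)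
  calc _ = ∫⁻ ω in {ω | ladder ω n < hitGT w ω},
          costSumE h tauPlus (shift (ladder ω n).toNat ω) ∂M.P y :=
        (M.strongMarkov_setLIntegral y (measurable_ladder n) hE (fun ω hω => hω.ne_top) hdet
          (measurable_costSumE hh measurable_tauPlus)).symm
    _ = _ := setLIntegral_congr_fun hE fun ω hω =>
        costSumE_tauPlus_shift h (ENat.natCast_toNat hω.ne_top).symm

theorem running_cost_ladder_decomposition_general
    (M : MarkovFamily) (h : ℝ → ℝ)
    (hhmono : Monotone h)
    (y w : ℝ) :
    ∑' n : ℕ, ∫⁻ ω in {ω : Traj | ladder ω n < hitGT w ω},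
        HfunE M h (ω ((ladder ω n).toNat)) ∂(M.P y)
      = ∫⁻ ω, costSumE h (hitGT w) ω ∂(M.P y) := by
  have hh : Measurable h := hhmono.measurable
  have hE := measurableSet_ladder_lt_hitGT w
  calc ∑' n : ℕ, ∫⁻ ω in {ω : Traj | ladder ω n < hitGT w ω},
        HfunE M h (ω ((ladder ω n).toNat)) ∂(M.P y)
      = ∑' n, ∫⁻ ω, {ω | ladder ω n < hitGT w ω}.indicator (excursionCost h n) ω ∂M.P y := by
        refine tsum_congr fun n => ?_
        rw [setLIntegral_HfunE_ladder M hh y w n, lintegral_indicator (hE n)]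
    _ = ∫⁻ ω, ∑' n, {ω | ladder ω n < hitGT w ω}.indicator (excursionCost h n) ω ∂M.P y :=
        (lintegral_tsum fun n =>
          ((measurable_excursionCost hh n).indicator (hE n)).aemeasurable).symm
    _ = ∫⁻ ω, costSumE h (hitGT w) ω ∂M.P y := by
        refine lintegral_congr fun ω => ?_
        simp only [indicator_apply, mem_ofPred_eq, excursionCost]
        rw [costSumE_eq_sumIoc, tsum_ite_sumIoc_eq_sumIoc _ (ladder_monotone ω) rfl (le_ladder ω)
          fun n => ladder_succ_le_hitGT]

/-- identity (∗): the total running cost up to `τ_w` decomposes along the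
ascending ladder epochs: `∑_{n=0}^∞ E_y[H(Y_{σ_n}) 1_{σ_n < τ_w}] = E_y[∑_{i=1}^{τ_w} h(Y_i)]`. -/
theorem running_cost_ladder_decomposition
    (M : MarkovFamily) (h : ℝ → ℝ)
    (hhmono : Monotone h) (hh0 : ∀ z : ℝ, 0 ≤ h z)
    (y w : ℝ) (hyw : y ≤ w)
    (hfin : ∀ᵐ ω ∂(M.P y), hitGT w ω ≠ ⊤)
    (hcost : ∫⁻ ω, costSumE h (hitGT w) ω ∂(M.P y) < ⊤) :
    ∑' n : ℕ, ∫⁻ ω in {ω : Traj | ladder ω n < hitGT w ω},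
        HfunE M h (ω ((ladder ω n).toNat)) ∂(M.P y)
      = ∫⁻ ω, costSumE h (hitGT w) ω ∂(M.P y) :=
  running_cost_ladder_decomposition_general M h hhmono y w

end Stmt

end
end

section
/- If γ is concave on ℝ and h is nondecreasing, then the function y ↦ γ(y) − φ(y) = E[γ(y) − γ(y + S_{τ⁺})] + E[Σ_{i=1}^{τ⁺} h(y + S_i)] is nondecreasing on ℝ; equivalently, f is nonincreasing on ℝ. -/
/-!
Pathwise comparison. At `τ⁺` the walk has climbed by `S_{τ⁺} > 0`, and for a concave `γ` the
increment `γ(y + s) - γ(y)` over a fixed step `s ≥ 0` decreases in `y`, while the accumulated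
cost `∑ h(y + S_i)` increases in `y` because `h` is monotone. Hence
`γ(y + S_{τ⁺}) - ∑ h(y + S_i) - γ(y)` is antitone in `y` for almost every path, and so is its
expectation `φ(y) - γ(y)`; dividing by `E[τ⁺] ≥ 0` gives the claim about `f`.
-/

open MeasureTheory ProbabilityTheory Filter Set
open scoped ENNReal NNReal ENat

noncomputable section

namespace StmtRW

variable {Ω : Type*}

/-- Positive part of an extended real number, as an element of `ℝ≥0∞`. -/
noncomputable def epos (x : EReal) : ℝ≥0∞ :=
  if x = ⊤ then ⊤ else ENNReal.ofReal x.toReal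

/-- Expectation of an extended-real random variable (with the convention `∞ - ∞ = -∞`). -/
noncomputable def eexp [MeasurableSpace Ω] (μ : Measure Ω) (Z : Ω → EReal) : EReal :=
  ((∫⁻ ω, epos (Z ω) ∂μ : ℝ≥0∞) : EReal) - ((∫⁻ ω, epos (-(Z ω)) ∂μ : ℝ≥0∞) : EReal)

/-- The random walk `S_n = ∑_{i=1}^n X_i`. -/
def S (X : ℕ → Ω → ℝ) (n : ℕ) (ω : Ω) : ℝ := ∑ i ∈ Finset.Icc 1 n, X i ω

/-- `τ⁺ = inf {n ≥ 1 : S_n > 0}`. -/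
noncomputable def tauPlus (X : ℕ → Ω → ℝ) (ω : Ω) : ℕ∞ :=
  sInf ((fun n : ℕ => (n : ℕ∞)) '' {n : ℕ | 1 ≤ n ∧ 0 < S X n ω})

/-- First entry time of `Y^y = y + S` into `(x, ∞)`. -/
noncomputable def hitGT (X : ℕ → Ω → ℝ) (x y : ℝ) (ω : Ω) : ℕ∞ :=
  sInf ((fun n : ℕ => (n : ℕ∞)) '' {n : ℕ | x < y + S X n ω})

/-- First entry time of `Y^y = y + S` into `[x, ∞)`. -/
noncomputable def hitGE (X : ℕ → Ω → ℝ) (x y : ℝ) (ω : Ω) : ℕ∞ :=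
  sInf ((fun n : ℕ => (n : ℕ∞)) '' {n : ℕ | x ≤ y + S X n ω})

/-- Pay-off when stopping the walk started at `y` at (deterministic) time `n`. -/
def payoffAt (γ h : ℝ → ℝ) (X : ℕ → Ω → ℝ) (y : ℝ) (n : ℕ) (ω : Ω) : ℝ :=
  γ (y + S X n ω) - ∑ i ∈ Finset.Icc 1 n, h (y + S X i ω)

/-- Pay-off of a possibly infinite random time, with the value `-∞` on `{τ = ∞}`. -/
def payoffE (γ h : ℝ → ℝ) (X : ℕ → Ω → ℝ) (y : ℝ) (τ : Ω → ℕ∞) (ω : Ω) : EReal :=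
  if τ ω = ⊤ then (⊥ : EReal) else ((payoffAt γ h X y (τ ω).toNat ω : ℝ) : EReal)

/-- `τ` is a (possibly infinite) stopping time of the natural filtration of `(X_i)_{i ≥ 1}`,
i.e. `{τ ≤ n} ∈ σ(X_1, …, X_n)` for every `n`. -/
def IsStopTime [MeasurableSpace Ω] (X : ℕ → Ω → ℝ) (τ : Ω → ℕ∞) : Prop :=
  ∀ n : ℕ, MeasurableSet[MeasurableSpace.comap
      (fun ω => fun i : Fin n => X (i + 1) ω) inferInstance] {ω : Ω | τ ω ≤ (n : ℕ∞)}

/-- The value function `V(y)`, a supremum over all stopping times of the natural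
filtration, the pay-off being interpreted as `-∞` on `{τ = ∞}`. -/
noncomputable def V [MeasurableSpace Ω] (μ : Measure Ω) (X : ℕ → Ω → ℝ) (γ h : ℝ → ℝ)
    (y : ℝ) : EReal :=
  ⨆ τ : {τ : Ω → ℕ∞ // IsStopTime X τ}, eexp μ (payoffE γ h X y τ.1)

/-- `φ(y) = E[γ(y + S_{τ⁺}) - ∑_{i=1}^{τ⁺} h(y + S_i)]`. -/
noncomputable def phi [MeasurableSpace Ω] (μ : Measure Ω) (X : ℕ → Ω → ℝ) (γ h : ℝ → ℝ)
    (y : ℝ) : ℝ :=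
  ∫ ω, payoffAt γ h X y (tauPlus X ω).toNat ω ∂μ

/-- `f(y) = (φ(y) - γ(y))/E[τ⁺]`. -/
noncomputable def ffun [MeasurableSpace Ω] (μ : Measure Ω) (X : ℕ → Ω → ℝ) (γ h : ℝ → ℝ)
    (y : ℝ) : ℝ :=
  (phi μ X γ h y - γ y) / (∫ ω, ((tauPlus X ω).toNat : ℝ) ∂μ)

/-- `(X_i)_{i ≥ 1}` are i.i.d. with `P(X_1 > 0) > 0`. -/
structure IsIIDWalk [MeasurableSpace Ω] (μ : Measure Ω) (X : ℕ → Ω → ℝ) : Prop where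
  meas : ∀ i, Measurable (X i)
  indep : iIndepFun (m := fun _ : ℕ => (inferInstance : MeasurableSpace ℝ))
    (fun i : ℕ => X (i + 1)) μ
  ident : ∀ i : ℕ, IdentDistrib (X (i + 1)) (X 1) μ μ
  pos : 0 < μ {ω : Ω | 0 < X 1 ω}

/-- Assumption (Opt) for the random walk: `E[sup_n (γ(y+S_n) - ∑_{i=1}^n h(y+S_i))] < ∞`
and `γ(y+S_n) - ∑_{i=1}^n h(y+S_i) → -∞` a.s. -/
def OptAssumption [MeasurableSpace Ω] (μ : Measure Ω) (X : ℕ → Ω → ℝ) (γ h : ℝ → ℝ) : Prop :=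
  ∀ y : ℝ,
    (∫⁻ ω, epos (⨆ n : ℕ, ((payoffAt γ h X y n ω : ℝ) : EReal)) ∂μ) < ⊤ ∧
    (∀ᵐ ω ∂μ, Tendsto (fun n => payoffAt γ h X y n ω) atTop atBot)


theorem _root_.ConcaveOn.antitone_increment {𝕜 : Type*} [Field 𝕜] [LinearOrder 𝕜]
    [IsStrictOrderedRing 𝕜] {f : 𝕜 → 𝕜} (hf : ConcaveOn 𝕜 univ f) {d : 𝕜} (hd : 0 ≤ d) :
    Antitone fun x => f (x + d) - f x := by
  intro a b hab
  rcases hd.eq_or_lt with rfl | hd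
  · simp
  have hslope : slope f b (b + d) ≤ slope f a (a + d) := calc
    slope f b (b + d) = slope f (b + d) b := slope_comm ..
    _ ≤ slope f (b + d) a := hf.slope_anti (mem_univ _)
      ⟨mem_univ a, (by linarith : a < b + d).ne⟩ ⟨mem_univ b, (by linarith : b < b + d).ne⟩ hab
    _ = slope f a (b + d) := slope_comm ..
    _ ≤ slope f a (a + d) := hf.slope_anti (mem_univ _)
      ⟨mem_univ _, (by linarith : a < a + d).ne'⟩ ⟨mem_univ _, (by linarith : a < b + d).ne'⟩
      (by linarith)
  simpa [slope_def_field, div_le_div_iff_of_pos_right hd] using hslope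

theorem S_tauPlus_pos {X : ℕ → Ω → ℝ} {ω : Ω} (hω : tauPlus X ω ≠ ⊤) :
    0 < S X (tauPlus X ω).toNat ω := by
  have hne : ((fun n : ℕ => (n : ℕ∞)) '' {n | 1 ≤ n ∧ 0 < S X n ω}).Nonempty :=
    nonempty_iff_ne_empty.2 fun h => hω (by rw [tauPlus, h, sInf_empty])
  obtain ⟨n, hn, hτ⟩ := csInf_mem hne
  rw [tauPlus, ← hτ, ENat.toNat_natCast]
  exact hn.2

theorem payoffAt_sub_antitone {γ h : ℝ → ℝ} (hγ : ConcaveOn ℝ univ γ) (hh : Monotone h)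
    {X : ℕ → Ω → ℝ} {n : ℕ} {ω : Ω} (hS : 0 ≤ S X n ω) :
    Antitone fun y => payoffAt γ h X y n ω - γ y := by
  intro y₁ y₂ hy
  have hgain := hγ.antitone_increment hS hy
  have hcost : ∑ i ∈ Finset.Icc 1 n, h (y₁ + S X i ω) ≤ ∑ i ∈ Finset.Icc 1 n, h (y₂ + S X i ω) :=
    Finset.sum_le_sum fun i _ => hh (by linarith)
  simp only [payoffAt] at hgain ⊢
  linarith

theorem phi_sub_antitone [MeasurableSpace Ω] {μ : Measure Ω} [IsProbabilityMeasure μ]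
    {X : ℕ → Ω → ℝ} {γ h : ℝ → ℝ} (hγ : ConcaveOn ℝ univ γ) (hh : Monotone h)
    (hτfin : ∀ᵐ ω ∂μ, tauPlus X ω ≠ ⊤)
    (hwd : ∀ y : ℝ, Integrable (fun ω => payoffAt γ h X y (tauPlus X ω).toNat ω) μ) :
    Antitone fun y => phi μ X γ h y - γ y := by
  have hphi : ∀ y, phi μ X γ h y - γ y =
      ∫ ω, (payoffAt γ h X y (tauPlus X ω).toNat ω - γ y) ∂μ := fun y => by
    rw [integral_sub (hwd y) (integrable_const _), integral_const, probReal_univ, one_smul, phi]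
  intro y₁ y₂ hy
  simp only [hphi]
  exact integral_mono_ae ((hwd y₂).sub (integrable_const _)) ((hwd y₁).sub (integrable_const _))
    (hτfin.mono fun ω hω => payoffAt_sub_antitone hγ hh (S_tauPlus_pos hω).le hy)

theorem gamma_sub_phi_monotone_general {Ω : Type*}
    [MeasurableSpace Ω] (μ : Measure Ω) [IsProbabilityMeasure μ]
    (X : ℕ → Ω → ℝ)
    (γ h : ℝ → ℝ) (hhmono : Monotone h)
    (hτfin : ∀ᵐ ω ∂μ, tauPlus X ω ≠ ⊤)
    (hwd : ∀ y : ℝ, Integrable (fun ω => payoffAt γ h X y (tauPlus X ω).toNat ω) μ)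
    (hconc : ConcaveOn ℝ Set.univ γ) :
    Monotone (fun y => γ y - phi μ X γ h y) ∧ Antitone (ffun μ X γ h) := by
  have hanti := phi_sub_antitone hconc hhmono hτfin hwd
  refine ⟨by simpa only [neg_sub] using hanti.neg, fun y₁ y₂ hy => ?_⟩
  exact div_le_div_of_nonneg_right (hanti hy) (integral_nonneg fun ω => Nat.cast_nonneg _)

/-- if `γ` is concave (on all of `ℝ`) and `h` is nondecreasing, then
`y ↦ γ(y) - φ(y)` is nondecreasing; equivalently, `f` is nonincreasing on `ℝ`. -/
theorem gamma_sub_phi_monotone {Ω : Type*}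
    [MeasurableSpace Ω] (μ : Measure Ω) [IsProbabilityMeasure μ]
    (X : ℕ → Ω → ℝ) (hiid : IsIIDWalk μ X)
    (γ h : ℝ → ℝ) (hγ : Monotone γ) (hhmono : Monotone h) (hh0 : ∀ z : ℝ, 0 ≤ h z)
    (hτfin : ∀ᵐ ω ∂μ, tauPlus X ω ≠ ⊤)
    (hτint : Integrable (fun ω => ((tauPlus X ω).toNat : ℝ)) μ)
    (hwd : ∀ y : ℝ, Integrable (fun ω => payoffAt γ h X y (tauPlus X ω).toNat ω) μ)
    (hconc : ConcaveOn ℝ Set.univ γ)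
    (hEpos : 0 < ∫ ω, ((tauPlus X ω).toNat : ℝ) ∂μ) :
    Monotone (fun y => γ y - phi μ X γ h y) ∧ Antitone (ffun μ X γ h) :=
  gamma_sub_phi_monotone_general μ X γ h hhmono hτfin hwd hconc

end StmtRW

end
end

section
/- The supremum of the payoff over all admissible stopping times equals the supremum over the upper regular ones: sup_{τ ∈ T} E[γ(X_τ) − ∫_0^τ h(X_s) ds] = sup_{τ ∈ U} E[γ(X_τ) − ∫_0^τ h(X_s) ds]. -/
open MeasureTheory ProbabilityTheory Filter Set
open scoped ENNReal NNReal

noncomputable section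

namespace StmtC

variable {Ω : Type*}

/-- The accumulated running cost `∫_0^τ h(X_s) ds` (as an extended real; `h ≥ 0`). -/
noncomputable def costC (X : ℝ → Ω → ℝ) (h : ℝ → ℝ) (τ : Ω → ℝ) (ω : Ω) : ℝ≥0∞ :=
  ∫⁻ s in Set.Ioc (0 : ℝ) (τ ω), ENNReal.ofReal (h (X s ω))

/-- The pay-off `γ(X_τ) - ∫_0^τ h(X_s) ds` when stopping at `τ`. -/
noncomputable def payoffC (X : ℝ → Ω → ℝ) (γ h : ℝ → ℝ) (τ : Ω → ℝ) (ω : Ω) : ℝ :=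
  γ (X (τ ω) ω) - (costC X h τ ω).toReal

/-- Expected pay-off `J(τ) = E[γ(X_τ) - ∫_0^τ h(X_s) ds]`. -/
noncomputable def J [MeasurableSpace Ω] (μ : Measure Ω) (X : ℝ → Ω → ℝ) (γ h : ℝ → ℝ)
    (τ : Ω → ℝ) : ℝ :=
  ∫ ω, payoffC X γ h τ ω ∂μ

/-- The class `T` of admissible stopping times: finite stopping times `τ ≥ 0` with
`E[τ] < ∞`, `E[∫_0^τ h(X_s) ds] < ∞` and `E[sup_{t ≤ τ} |γ(X_t)|] < ∞`. -/
def Tset [m : MeasurableSpace Ω] (μ : Measure Ω) (ℱ : Filtration ℝ m) (X : ℝ → Ω → ℝ)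
    (γ h : ℝ → ℝ) : Set (Ω → ℝ) :=
  {τ | IsStoppingTime ℱ (fun ω => (τ ω : WithTop ℝ)) ∧ (∀ ω, 0 ≤ τ ω) ∧ Integrable τ μ ∧
    (∫⁻ ω, costC X h τ ω ∂μ) < ⊤ ∧
    (∫⁻ ω, ⨆ t ∈ Set.Icc (0 : ℝ) (τ ω), ENNReal.ofReal |γ (X t ω)| ∂μ) < ⊤}

/-- A stopping time is upper regular if it is a.s. bounded by the first entry time of `X`
into some half-line `[ȳ, ∞)` (equivalently: strictly before `τ`, the process stays
below `ȳ`). -/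
def UpperRegular [MeasurableSpace Ω] (μ : Measure Ω) (X : ℝ → Ω → ℝ) (τ : Ω → ℝ) : Prop :=
  ∃ ybar : ℝ, ∀ᵐ ω ∂μ, ∀ t : ℝ, 0 ≤ t → t < τ ω → X t ω < ybar

/-- The running maximum `M_t = sup_{r ≤ t} X_r` (over `r ∈ [0, t]`). -/
noncomputable def runMax (X : ℝ → Ω → ℝ) (t : ℝ) (ω : Ω) : ℝ :=
  sSup ((fun r => X r ω) '' Set.Icc (0 : ℝ) t)

/-- The first passage time `τ_y = inf {t ≥ 0 : X_t > y} ∈ [0, ∞]`. -/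
noncomputable def passage (X : ℝ → Ω → ℝ) (y : ℝ) (ω : Ω) : ℝ≥0∞ :=
  sInf (ENNReal.ofReal '' {t : ℝ | 0 ≤ t ∧ y < X t ω})

/-!
Truncate an admissible `τ` at the first time `τ_n` at which `X` exceeds `n`. The stopping time
`σ_n = τ ∧ τ_n` is again admissible, and upper regular since `X ≤ n` before `σ_n`. By
right-continuity `X_{σ_n} ≥ n` whenever `σ_n ≠ τ`; as `γ` is nondecreasing and the running cost
grows with time, the pay-off of `σ_n` dominates that of `τ` once `n ≥ X_τ`, and always dominates
`min (γ(X_τ) - C_τ) (γ(0) - C_τ)`, where `C_τ` is the cost up to `τ`. Dominated convergence for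
`min (pay-off of τ) (pay-off of σ_n)` then gives `J(τ) ≤ sup_n J(σ_n)`.
-/

open Topology

section RightContinuousPaths

variable {α E : Type*} [MeasurableSpace α] [TopologicalSpace E]
  [TopologicalSpace.PseudoMetrizableSpace E] [MeasurableSpace E] [BorelSpace E]

lemma measurable_uncurry_of_continuousWithinAt_Ici {u : ℝ → α → E}
    (hu : ∀ t, Measurable (u t)) (hrc : ∀ a t, ContinuousWithinAt (u · a) (Ici t) t) :
    Measurable (Function.uncurry u) := by
  -- approximate `t` from above by the grid points `⌈t (k + 1)⌉ / (k + 1)`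
  set A : ℕ → ℝ → ℝ := fun k t => ⌈t * (k + 1)⌉ / (k + 1)
  have hA_ge : ∀ k t, t ≤ A k t := fun k t => by
    rw [le_div_iff₀ (by positivity)]
    exact Int.le_ceil _
  have hA_le : ∀ k t, A k t ≤ t + 1 / (k + 1) := fun k t => by
    rw [div_le_iff₀ (by positivity), add_mul, one_div_mul_cancel (by positivity)]
    exact (Int.ceil_lt_add_one _).le
  have hA_meas : ∀ k, Measurable fun p : ℝ × α => u (A k p.1) p.2 := fun k => by
    have hgrid : Measurable fun q : α × ℤ => u (q.2 / (k + 1)) q.1 :=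
      measurable_from_prod_countable_left fun i => hu ((i : ℝ) / (k + 1))
    exact hgrid.comp (measurable_snd.prodMk (Int.measurable_ceil.comp (measurable_fst.mul_const _)))
  refine measurable_of_tendsto_metrizable hA_meas (tendsto_pi_nhds.2 fun p => ?_)
  have hA_tendsto : Tendsto (fun k => A k p.1) atTop (𝓝[≥] p.1) := by
    refine tendsto_nhdsWithin_of_tendsto_nhds_of_eventually_within _ ?_
      (Eventually.of_forall (hA_ge · p.1))
    refine tendsto_of_tendsto_of_tendsto_of_le_of_le tendsto_const_nhds ?_ (hA_ge · p.1)
      (hA_le · p.1)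
    simpa using (tendsto_const_nhds (x := p.1)).add tendsto_one_div_add_atTop_nhds_zero_nat
  exact (hrc p.2 p.1).tendsto.comp hA_tendsto

end RightContinuousPaths

section Hitting

variable {Ω β : Type*} [TopologicalSpace β]

lemma hittingAfter_mem_closure {ι : Type*} [ConditionallyCompleteLinearOrder ι]
    [TopologicalSpace ι] [OrderTopology ι] {u : ι → Ω → β} {s : Set β} {n t : ι} {ω : Ω}
    (hu : ContinuousWithinAt (u · ω) (Ici t) t) (ht : hittingAfter u s n ω = t) :
    u t ω ∈ closure s := by
  classical
  have hex : ∃ j, n ≤ j ∧ u j ω ∈ s := by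
    by_contra hne
    simp [hittingAfter, hne] at ht
  rw [hittingAfter, if_pos hex, WithTop.coe_eq_coe] at ht
  have hbdd : BddBelow {i | n ≤ i ∧ u i ω ∈ s} := ⟨n, fun i hi => hi.1⟩
  have hsub : {i | n ≤ i ∧ u i ω ∈ s} ⊆ Ici t := fun i hi => ht ▸ csInf_le hbdd hi
  exact closure_mono (image_subset_iff.2 fun i hi => hi.2)
    ((hu.mono hsub).mem_closure_image (ht ▸ csInf_mem_closure hex hbdd))

lemma isStoppingTime_hittingAfter_of_continuousWithinAt [MeasurableSpace β]
    [OpensMeasurableSpace β] {m : MeasurableSpace Ω} {ℱ : Filtration ℝ m} [ℱ.IsRightContinuous]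
    {u : ℝ → Ω → β} (hu : Adapted ℱ u) (hrc : ∀ ω t, ContinuousWithinAt (u · ω) (Ici t) t)
    {s : Set β} (hs : IsOpen s) (n : ℝ) :
    IsStoppingTime ℱ (hittingAfter u s n) := by
  refine isStoppingTime_of_measurableSet_lt_of_isRightContinuous fun t => ?_
  have hset : {ω | hittingAfter u s n ω < t} = ⋃ (q : ℚ) (_ : (q : ℝ) ∈ Ico n t), u q ⁻¹' s := by
    ext ω
    simp only [mem_ofPred_eq, hittingAfter_lt_iff, mem_iUnion, mem_preimage, exists_prop]
    refine ⟨fun ⟨j, hj, hjs⟩ => ?_, fun ⟨q, hq, hqs⟩ => ⟨q, hq, hqs⟩⟩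
    -- by right-continuity the path stays in `s` on some `[j, c)`, which contains a rational `< t`
    obtain ⟨c, hjc, hc⟩ := mem_nhdsGE_iff_exists_Ico_subset.1 (hrc ω j (hs.mem_nhds hjs))
    obtain ⟨q, hjq, hqc⟩ := exists_rat_btwn (lt_min hjc hj.2)
    exact ⟨q, ⟨hj.1.trans hjq.le, hqc.trans_le (min_le_right _ _)⟩,
      hc ⟨hjq.le, hqc.trans_le (min_le_left _ _)⟩⟩
  rw [hset]
  exact MeasurableSet.iUnion fun q => MeasurableSet.iUnion fun hq =>
    ℱ.mono hq.2.le _ (hu q hs.measurableSet)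

end Hitting

lemma isRightContinuous_of_eq_iInf {m : MeasurableSpace Ω} {ℱ : Filtration ℝ m}
    (h : ∀ t, ℱ t = ⨅ s ∈ Ioi t, ℱ s) : ℱ.IsRightContinuous :=
  ⟨fun t => by rw [Filtration.rightCont_eq, h t]; rfl⟩

lemma measurable_of_isStoppingTime_coe {m : MeasurableSpace Ω} {ℱ : Filtration ℝ m}
    {τ : Ω → ℝ} (hτ : IsStoppingTime ℱ (fun ω => (τ ω : WithTop ℝ))) : Measurable τ :=
  (WithTop.measurable_untopD 0).comp hτ.measurable'

section MinHitting

variable {Ω : Type*} {X : ℝ → Ω → ℝ} {y : ℝ} {τ : Ω → ℝ} {ω : Ω}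

def minHitting (X : ℝ → Ω → ℝ) (y : ℝ) (τ : Ω → ℝ) (ω : Ω) : ℝ :=
  (min (τ ω : WithTop ℝ) (hittingAfter X (Ioi y) 0 ω)).untop
    ((min_le_left _ _).trans_lt (WithTop.coe_lt_top _)).ne

lemma coe_minHitting :
    (minHitting X y τ ω : WithTop ℝ) = min (τ ω : WithTop ℝ) (hittingAfter X (Ioi y) 0 ω) :=
  WithTop.coe_untop _ _

lemma minHitting_le : minHitting X y τ ω ≤ τ ω :=
  WithTop.coe_le_coe.1 (coe_minHitting ▸ min_le_left _ _)

lemma minHitting_nonneg (hτ : 0 ≤ τ ω) : 0 ≤ minHitting X y τ ω :=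
  WithTop.coe_le_coe.1 (coe_minHitting ▸ le_min (WithTop.coe_le_coe.2 hτ) (le_hittingAfter ω))

lemma apply_le_of_lt_minHitting {t : ℝ} (ht0 : 0 ≤ t) (ht : t < minHitting X y τ ω) :
    X t ω ≤ y :=
  not_lt.1 <| notMem_of_lt_hittingAfter
    ((WithTop.coe_lt_coe.2 ht).trans_le (coe_minHitting ▸ min_le_right _ _)) ht0

lemma minHitting_eq_or_le_apply (hrc : ∀ t, ContinuousWithinAt (X · ω) (Ici t) t) :
    minHitting X y τ ω = τ ω ∨ y ≤ X (minHitting X y τ ω) ω := by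
  rcases min_choice (τ ω : WithTop ℝ) (hittingAfter X (Ioi y) 0 ω) with hτ | hH
  · exact Or.inl (WithTop.coe_injective (coe_minHitting.trans hτ))
  · right
    simpa only [closure_Ioi, mem_Ici] using
      hittingAfter_mem_closure (hrc _) (coe_minHitting.trans hH).symm

lemma isStoppingTime_minHitting {m : MeasurableSpace Ω} {ℱ : Filtration ℝ m}
    [ℱ.IsRightContinuous] (hX : Adapted ℱ X) (hrc : ∀ ω t, ContinuousWithinAt (X · ω) (Ici t) t)
    (hτ : IsStoppingTime ℱ (fun ω => (τ ω : WithTop ℝ))) :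
    IsStoppingTime ℱ (fun ω => (minHitting X y τ ω : WithTop ℝ)) := by
  simp_rw [coe_minHitting]
  exact hτ.min (isStoppingTime_hittingAfter_of_continuousWithinAt hX hrc isOpen_Ioi 0)

lemma upperRegular_minHitting [MeasurableSpace Ω] (μ : Measure Ω) :
    UpperRegular μ X (minHitting X y τ) :=
  ⟨y + 1, ae_of_all _ fun _ _ ht0 ht => (apply_le_of_lt_minHitting ht0 ht).trans_lt (lt_add_one y)⟩

end MinHitting

section Payoff

variable {Ω : Type*} {X : ℝ → Ω → ℝ} {γ h : ℝ → ℝ} {ρ τ : Ω → ℝ} {ω : Ω}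

lemma costC_mono (hρτ : ρ ω ≤ τ ω) : costC X h ρ ω ≤ costC X h τ ω :=
  lintegral_mono_set (Ioc_subset_Ioc_right hρτ)

lemma payoffC_eq_of_apply_eq (hρτ : ρ ω = τ ω) : payoffC X γ h ρ ω = payoffC X γ h τ ω := by
  simp only [payoffC, costC, hρτ]

lemma sub_costC_le_payoffC (hγ : Monotone γ) (hρτ : ρ ω ≤ τ ω) (hτ : costC X h τ ω ≠ ⊤)
    {z : ℝ} (hz : z ≤ X (ρ ω) ω) : γ z - (costC X h τ ω).toReal ≤ payoffC X γ h ρ ω :=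
  sub_le_sub (hγ hz) (ENNReal.toReal_mono hτ (costC_mono hρτ))

lemma min_payoffC_le_payoffC_minHitting (hγ : Monotone γ)
    (hrc : ∀ t, ContinuousWithinAt (X · ω) (Ici t) t) (hτ : costC X h τ ω ≠ ⊤) {z : ℝ}
    (hz : z ≤ y) :
    min (payoffC X γ h τ ω) (γ z - (costC X h τ ω).toReal) ≤
      payoffC X γ h (minHitting X y τ) ω := by
  rcases minHitting_eq_or_le_apply hrc with heq | hle
  · exact (min_le_left _ _).trans (payoffC_eq_of_apply_eq heq).ge
  · exact (min_le_right _ _).trans (sub_costC_le_payoffC hγ minHitting_le hτ (hz.trans hle))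

variable [MeasurableSpace Ω]

lemma measurable_costC (hX : Measurable (Function.uncurry X)) (hh : Measurable h)
    (hρ : Measurable ρ) : Measurable (costC X h ρ) := by
  classical
  have hset : MeasurableSet {p : Ω × ℝ | p.2 ∈ Ioc 0 (ρ p.1)} :=
    (measurableSet_lt measurable_const measurable_snd).inter
      (measurableSet_le measurable_snd (hρ.comp measurable_fst))
  have hint : Measurable fun p : Ω × ℝ => ENNReal.ofReal (h (X p.2 p.1)) :=
    (hh.comp (hX.comp measurable_swap)).ennreal_ofReal
  unfold costC
  simp_rw [← lintegral_indicator measurableSet_Ioc, indicator_apply]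
  exact (hint.ite hset measurable_const).lintegral_prod_right'

lemma measurable_payoffC (hX : Measurable (Function.uncurry X)) (hγ : Measurable γ)
    (hh : Measurable h) (hρ : Measurable ρ) : Measurable (payoffC X γ h ρ) :=
  (hγ.comp (hX.comp (hρ.prodMk measurable_id))).sub (measurable_costC hX hh hρ).ennreal_toReal

end Payoff

lemma integral_le_iSup_integral_of_eventually_le {Ω : Type*} [MeasurableSpace Ω]
    {μ : Measure Ω} {f L : Ω → ℝ} {F : ℕ → Ω → ℝ} (hf : Integrable f μ) (hL : Integrable L μ)
    (hF : ∀ n, Integrable (F n) μ) (hLF : ∀ n, ∀ᵐ ω ∂μ, L ω ≤ F n ω)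
    (hfF : ∀ᵐ ω ∂μ, ∀ᶠ n in atTop, f ω ≤ F n ω) :
    ((∫ ω, f ω ∂μ : ℝ) : EReal) ≤ ⨆ n, ((∫ ω, F n ω ∂μ : ℝ) : EReal) := by
  -- dominated convergence for `min f (F n)`, which lies between `min f L` and `f`
  have hlim : Tendsto (fun n => ∫ ω, min (f ω) (F n ω) ∂μ) atTop (𝓝 (∫ ω, f ω ∂μ)) := by
    refine tendsto_integral_of_dominated_convergence (fun ω => |f ω| + |L ω|)
      (fun n => (hf.inf (hF n)).aestronglyMeasurable) (hf.abs.add hL.abs) (fun n => ?_) ?_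
    · filter_upwards [hLF n] with ω hω
      rw [Real.norm_eq_abs, abs_le]
      refine ⟨le_min ?_ ?_, (min_le_left _ _).trans ?_⟩ <;>
        linarith [neg_abs_le (f ω), neg_abs_le (L ω), le_abs_self (f ω), abs_nonneg (L ω)]
    · filter_upwards [hfF] with ω hω
      exact tendsto_const_nhds.congr' (hω.mono fun n hn => (min_eq_left hn).symm)
  refine le_of_tendsto' ((continuous_coe_real_ereal.tendsto _).comp hlim) fun n => ?_
  have hmin_le : ∫ ω, min (f ω) (F n ω) ∂μ ≤ ∫ ω, F n ω ∂μ :=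
    integral_mono (hf.inf (hF n)) (hF n) fun ω => min_le_right _ _
  exact (EReal.coe_le_coe_iff.2 hmin_le).trans (le_iSup (fun n => ((∫ ω, F n ω ∂μ : ℝ) : EReal)) n)

section Admissible

variable {Ω : Type*} [m : MeasurableSpace Ω] {μ : Measure Ω} {ℱ : Filtration ℝ m}
  {X : ℝ → Ω → ℝ} {γ h : ℝ → ℝ} {ρ τ : Ω → ℝ}

lemma mem_Tset_of_le (hτ : τ ∈ Tset μ ℱ X γ h)
    (hρ : IsStoppingTime ℱ (fun ω => (ρ ω : WithTop ℝ)))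
    (hρ0 : ∀ ω, 0 ≤ ρ ω) (hρτ : ∀ ω, ρ ω ≤ τ ω) : ρ ∈ Tset μ ℱ X γ h := by
  obtain ⟨-, -, hτint, hcost, hsup⟩ := hτ
  refine ⟨hρ, hρ0, hτint.mono' (measurable_of_isStoppingTime_coe hρ).aestronglyMeasurable
    (ae_of_all _ fun ω => ?_), (lintegral_mono fun ω => costC_mono (hρτ ω)).trans_lt hcost,
    (lintegral_mono fun ω => biSup_mono fun t ht => ⟨ht.1, ht.2.trans (hρτ ω)⟩).trans_lt hsup⟩
  rw [Real.norm_eq_abs, abs_of_nonneg (hρ0 ω)]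
  exact hρτ ω

lemma integrable_toReal_costC (hX : Measurable (Function.uncurry X)) (hh : Measurable h)
    (hτ : τ ∈ Tset μ ℱ X γ h) : Integrable (fun ω => (costC X h τ ω).toReal) μ :=
  integrable_toReal_of_lintegral_ne_top
    (measurable_costC hX hh (measurable_of_isStoppingTime_coe hτ.1)).aemeasurable hτ.2.2.2.1.ne

lemma integrable_payoffC (hX : Measurable (Function.uncurry X)) (hγ : Measurable γ)
    (hh : Measurable h) (hτ : τ ∈ Tset μ ℱ X γ h) : Integrable (payoffC X γ h τ) μ := by
  have hτm := measurable_of_isStoppingTime_coe hτ.1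
  have hstopped : Integrable (fun ω => γ (X (τ ω) ω)) μ := by
    refine ⟨(hγ.comp (hX.comp (hτm.prodMk measurable_id))).aestronglyMeasurable, ?_⟩
    refine (lintegral_mono fun ω => ?_).trans_lt hτ.2.2.2.2
    rw [Real.enorm_eq_ofReal_abs]
    exact le_biSup (fun t => ENNReal.ofReal |γ (X t ω)|) ⟨hτ.2.1 ω, le_rfl⟩
  exact hstopped.sub (integrable_toReal_costC hX hh hτ)

lemma mem_Tset_minHitting [ℱ.IsRightContinuous] (hX : Adapted ℱ X)
    (hrc : ∀ ω t, ContinuousWithinAt (X · ω) (Ici t) t) (hτ : τ ∈ Tset μ ℱ X γ h) (y : ℝ) :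
    minHitting X y τ ∈ Tset μ ℱ X γ h :=
  mem_Tset_of_le hτ (isStoppingTime_minHitting hX hrc hτ.1)
    (fun ω => minHitting_nonneg (hτ.2.1 ω)) fun _ => minHitting_le

lemma J_le_iSup_J_minHitting [IsFiniteMeasure μ] [ℱ.IsRightContinuous] (hX : Adapted ℱ X)
    (hrc : ∀ ω t, ContinuousWithinAt (X · ω) (Ici t) t) (hγ : Monotone γ) (hh : Measurable h)
    (hτ : τ ∈ Tset μ ℱ X γ h) :
    (J μ X γ h τ : EReal) ≤ ⨆ n : ℕ, (J μ X γ h (minHitting X n τ) : EReal) := by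
  have hXm : Measurable (Function.uncurry X) :=
    measurable_uncurry_of_continuousWithinAt_Ici (fun t => (hX t).mono (ℱ.le t) le_rfl) hrc
  have hcost : ∀ᵐ ω ∂μ, costC X h τ ω ≠ ⊤ :=
    (ae_lt_top (measurable_costC hXm hh (measurable_of_isStoppingTime_coe hτ.1))
      hτ.2.2.2.1.ne).mono fun _ => ne_of_lt
  have hpay := integrable_payoffC hXm hγ.measurable hh hτ
  refine integral_le_iSup_integral_of_eventually_le hpay
    (hpay.inf ((integrable_const (γ 0)).sub (integrable_toReal_costC hXm hh hτ)))
    (fun n => integrable_payoffC hXm hγ.measurable hh (mem_Tset_minHitting hX hrc hτ n))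
    (fun n => ?_) ?_
  · filter_upwards [hcost] with ω hω
    exact min_payoffC_le_payoffC_minHitting hγ (hrc ω) hω (Nat.cast_nonneg n)
  · filter_upwards [hcost] with ω hω
    filter_upwards [eventually_ge_atTop ⌈X (τ ω) ω⌉₊] with n hn
    calc payoffC X γ h τ ω
        = min (payoffC X γ h τ ω) (γ (X (τ ω) ω) - (costC X h τ ω).toReal) := (min_self _).symm
      _ ≤ payoffC X γ h (minHitting X n τ) ω :=
        min_payoffC_le_payoffC_minHitting hγ (hrc ω) hω ((Nat.le_ceil _).trans (mod_cast hn))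

end Admissible

theorem sup_over_upper_regular_general {Ω : Type*}
    [m : MeasurableSpace Ω] (μ : Measure Ω) [IsProbabilityMeasure μ]
    (ℱ : Filtration ℝ m) (X : ℝ → Ω → ℝ)
    (hadapt : Adapted ℱ X)
    (hrc : ∀ ω, ∀ t : ℝ, ContinuousWithinAt (fun s => X s ω) (Set.Ici t) t)
    (hrightF : ∀ t : ℝ, (ℱ t : MeasurableSpace Ω) = ⨅ s ∈ Set.Ioi t, (ℱ s : MeasurableSpace Ω))
    (γ h : ℝ → ℝ) (hγ : Monotone γ) (hhc : Continuous h) :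
    (⨆ τ ∈ Tset μ ℱ X γ h, ((J μ X γ h τ : ℝ) : EReal))
      = ⨆ τ ∈ {τ ∈ Tset μ ℱ X γ h | UpperRegular μ X τ}, ((J μ X γ h τ : ℝ) : EReal) := by
  have := isRightContinuous_of_eq_iInf hrightF
  refine le_antisymm (iSup₂_le fun τ hτ => ?_) (biSup_mono fun _ hρ => hρ.1)
  refine (J_le_iSup_J_minHitting hadapt hrc hγ hhc.measurable hτ).trans (iSup_le fun n => ?_)
  exact le_biSup (fun ρ => ((J μ X γ h ρ : ℝ) : EReal))
    ⟨mem_Tset_minHitting hadapt hrc hτ n, upperRegular_minHitting μ⟩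

/-- Lemma 3.4: the supremum of the expected pay-off over all admissible
stopping times equals the supremum over the upper regular ones. -/
theorem sup_over_upper_regular {Ω : Type*}
    [m : MeasurableSpace Ω] (μ : Measure Ω) [IsProbabilityMeasure μ]
    (ℱ : Filtration ℝ m) (X : ℝ → Ω → ℝ)
    (hadapt : Adapted ℱ X)
    (hrc : ∀ ω, ∀ t : ℝ, ContinuousWithinAt (fun s => X s ω) (Set.Ici t) t)
    (hrightF : ∀ t : ℝ, (ℱ t : MeasurableSpace Ω) = ⨅ s ∈ Set.Ioi t, (ℱ s : MeasurableSpace Ω))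
    (hcompl : ∀ s : Set Ω, μ s = 0 → MeasurableSet[ℱ 0] s)
    (x : ℝ) (hX0 : ∀ᵐ ω ∂μ, X 0 ω = x)
    (γ h : ℝ → ℝ) (hγ : Monotone γ) (hh0 : ∀ z : ℝ, 0 ≤ h z) (hhc : Continuous h) :
    (⨆ τ ∈ Tset μ ℱ X γ h, ((J μ X γ h τ : ℝ) : EReal))
      = ⨆ τ ∈ {τ ∈ Tset μ ℱ X γ h | UpperRegular μ X τ}, ((J μ X γ h τ : ℝ) : EReal) :=
  sup_over_upper_regular_general (m := m) μ ℱ X hadapt hrc hrightF γ h hγ hhc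

end StmtC

end
end

section
/- Let f : ℝ → ℝ satisfy f > 0 on (−∞, x̄), f(x̄) = 0 and f < 0 on (x̄, ∞) for some x̄ ∈ ℝ, let m : [0, ∞) → ℝ be nondecreasing with s ↦ f(m(s)) locally Lebesgue integrable, and for a ∈ ℝ set T_a := inf{s ≥ 0 : m(s) > a} ∈ [0, ∞]. Then for every ȳ ∈ ℝ and every finite t with t ≤ T_ȳ, one has ∫_0^t f(m(s)) ds ≤ ∫_0^{T_{x̄ ∧ ȳ}} f(m(s)) ds (the right-hand side understood as an extended-real Lebesgue integral when T_{x̄ ∧ ȳ} = ∞). -/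
/-! For `0 < s < t` the time `s` lies before `T_ȳ`, so `m s ≤ ȳ`; if moreover `s` lies strictly
after `T_{x̄ ∧ ȳ}`, then `m s > x̄ ∧ ȳ`, hence `m s > x̄` and `f (m s) < 0`. So, up to the single
point `T_{x̄ ∧ ȳ}`, the positive part of `f ∘ m` on `(0, t)` is carried by
`{s ≥ 0 : s < T_{x̄ ∧ ȳ}}`, and `∫_0^t f ∘ m` is bounded by the integral of that positive part. -/

open MeasureTheory Set
open scoped ENNReal

noncomputable section

namespace Stmt11

/-- The first time the nondecreasing function `m` exceeds the level `a`:
`T_a = inf {s ≥ 0 : m(s) > a} ∈ [0, ∞]` (with `inf ∅ = ∞`). -/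
noncomputable def T (m : ℝ → ℝ) (a : ℝ) : ℝ≥0∞ :=
  sInf (ENNReal.ofReal '' {s : ℝ | 0 ≤ s ∧ a < m s})

end Stmt11

namespace MeasureTheory

variable {α : Type*} [MeasurableSpace α] {μ : Measure α}

theorem ofReal_integral_le_lintegral_ofReal (f : α → ℝ) :
    ENNReal.ofReal (∫ a, f a ∂μ) ≤ ∫⁻ a, ENNReal.ofReal (f a) ∂μ := by
  by_cases hf : Integrable f μ
  · refine (ENNReal.ofReal_le_ofReal ?_).trans ENNReal.ofReal_toReal_le
    rw [integral_eq_lintegral_pos_part_sub_lintegral_neg_part hf]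
    exact sub_le_self _ ENNReal.toReal_nonneg
  · simp [integral_undef hf]

theorem setLIntegral_le_of_ae_restrict_diff_eq_zero {s t : Set α} {f : α → ℝ≥0∞}
    (hf : ∀ᵐ x ∂μ.restrict (s \ t), f x = 0) :
    ∫⁻ x in s, f x ∂μ ≤ ∫⁻ x in t, f x ∂μ :=
  calc ∫⁻ x in s, f x ∂μ ≤ ∫⁻ x in t ∪ s \ t, f x ∂μ := lintegral_mono_set (by simp)
    _ ≤ (∫⁻ x in t, f x ∂μ) + ∫⁻ x in s \ t, f x ∂μ := lintegral_union_le f t (s \ t)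
    _ = ∫⁻ x in t, f x ∂μ := by rw [lintegral_congr_ae hf, lintegral_zero, add_zero]

end MeasureTheory

namespace Stmt11

theorem le_of_ofReal_lt_T {m : ℝ → ℝ} {a s : ℝ} (hs : 0 ≤ s) (h : ENNReal.ofReal s < T m a) :
    m s ≤ a :=
  not_lt.1 fun has => (sInf_le ⟨s, ⟨hs, has⟩, rfl⟩ : T m a ≤ ENNReal.ofReal s).not_gt h

theorem lt_of_T_lt_ofReal {m : ℝ → ℝ} (hm : MonotoneOn m (Ici 0)) {a s : ℝ} (hs : 0 ≤ s)
    (h : T m a < ENNReal.ofReal s) : a < m s := by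
  obtain ⟨_, ⟨r, ⟨hr, har⟩, rfl⟩, hrs⟩ := sInf_lt_iff.1 h
  exact har.trans_le (hm hr hs (ENNReal.ofReal_lt_ofReal_iff'.1 hrs).1.le)

theorem measurableSet_ofReal_lt_T (m : ℝ → ℝ) (a : ℝ) :
    MeasurableSet {s : ℝ | 0 ≤ s ∧ ENNReal.ofReal s < T m a} :=
  measurableSet_Ici.inter (measurableSet_lt ENNReal.measurable_ofReal measurable_const)

theorem lt_of_T_min_lt_ofReal {m : ℝ → ℝ} (hm : MonotoneOn m (Ici 0)) {a b s : ℝ} (hs : 0 ≤ s)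
    (hmin : T m (min a b) < ENNReal.ofReal s) (hb : ENNReal.ofReal s < T m b) : a < m s :=
  (min_lt_iff.1 (lt_of_T_lt_ofReal hm hs hmin)).resolve_right (le_of_ofReal_lt_T hs hb).not_gt

theorem integral_le_integral_up_to_root_general
    (f : ℝ → ℝ) (xbar : ℝ)
    (hneg : ∀ z : ℝ, xbar < z → f z < 0)
    (m : ℝ → ℝ) (hm : MonotoneOn m (Set.Ici (0 : ℝ)))
    (ybar t : ℝ) (ht : ENNReal.ofReal t ≤ T m ybar) :
    ((∫ s in Set.Ioc (0 : ℝ) t, f (m s) : ℝ) : EReal)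
      ≤ ((∫⁻ s in {s : ℝ | 0 ≤ s ∧ ENNReal.ofReal s < T m (min xbar ybar)},
          ENNReal.ofReal (f (m s)) : ℝ≥0∞) : EReal) := by
  set τ := T m (min xbar ybar)
  have hae : ∀ᵐ s ∂volume.restrict (Ioo 0 t \ {s : ℝ | 0 ≤ s ∧ ENNReal.ofReal s < τ}),
      ENNReal.ofReal (f (m s)) = 0 := by
    rw [ae_restrict_iff' (measurableSet_Ioo.diff (measurableSet_ofReal_lt_T m _))]
    filter_upwards [compl_mem_ae_iff.2 (measure_singleton τ.toReal)]
      with s hsτ ⟨⟨hs0, hst⟩, hsS⟩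
    have hτs : τ < ENNReal.ofReal s := lt_of_le_of_ne (not_lt.1 fun h => hsS ⟨hs0.le, h⟩)
      fun h => hsτ (by rw [h, ENNReal.toReal_ofReal hs0.le]; rfl)
    have hsy : ENNReal.ofReal s < T m ybar :=
      ((ENNReal.ofReal_lt_ofReal_iff (hs0.trans hst)).2 hst).trans_le ht
    exact ENNReal.ofReal_eq_zero.2 (hneg _ (lt_of_T_min_lt_ofReal hm hs0.le hτs hsy)).le
  calc ((∫ s in Ioc 0 t, f (m s) : ℝ) : EReal)
      ≤ ((ENNReal.ofReal (∫ s in Ioo 0 t, f (m s)) : ℝ≥0∞) : EReal) := by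
        rw [EReal.coe_ennreal_ofReal, integral_Ioc_eq_integral_Ioo]
        exact_mod_cast le_max_left _ _
    _ ≤ ((∫⁻ s in Ioo 0 t, ENNReal.ofReal (f (m s)) : ℝ≥0∞) : EReal) :=
        EReal.coe_ennreal_le_coe_ennreal_iff.2 (ofReal_integral_le_lintegral_ofReal _)
    _ ≤ _ :=
        EReal.coe_ennreal_le_coe_ennreal_iff.2 (setLIntegral_le_of_ae_restrict_diff_eq_zero hae)

/-- if `f > 0` on `(-∞, x̄)`, `f(x̄) = 0`, `f < 0` on `(x̄, ∞)`, and `m` is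
nondecreasing on `[0, ∞)` with `s ↦ f(m(s))` locally integrable, then for every `ȳ` and every
finite `t ≤ T_ȳ`, `∫_0^t f(m(s)) ds ≤ ∫_0^{T_{x̄ ∧ ȳ}} f(m(s)) ds`, the right-hand side
understood as an extended-real Lebesgue integral (the integrand is nonnegative there). -/
theorem integral_le_integral_up_to_root
    (f : ℝ → ℝ) (xbar : ℝ)
    (hpos : ∀ z : ℝ, z < xbar → 0 < f z)
    (hzero : f xbar = 0)
    (hneg : ∀ z : ℝ, xbar < z → f z < 0)
    (m : ℝ → ℝ) (hm : MonotoneOn m (Set.Ici (0 : ℝ)))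
    (hloc : LocallyIntegrableOn (fun s => f (m s)) (Set.Ici (0 : ℝ)) volume)
    (ybar t : ℝ) (ht0 : 0 ≤ t) (ht : ENNReal.ofReal t ≤ T m ybar) :
    ((∫ s in Set.Ioc (0 : ℝ) t, f (m s) : ℝ) : EReal)
      ≤ ((∫⁻ s in {s : ℝ | 0 ≤ s ∧ ENNReal.ofReal s < T m (min xbar ybar)},
          ENNReal.ofReal (f (m s)) : ℝ≥0∞) : EReal) :=
  integral_le_integral_up_to_root_general f xbar hneg m hm ybar t ht

end Stmt11

end
end
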